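/- Player 1 may need infinite memory to win 1-fair mean-payoff games: there exists a 1-fair mean-payoff game (G,E_f,MP_v^f) and a node q ∈ Win_1 such that no finite-memory player-1 strategy is winning from q. Concretely, this holds for the arena with two player-1 nodes q and p, a self-loop on q of weight +1, a fair edge (q,p) of weight −4, and an edge (p,q) of weight 0, with E_f = {(q,p)} and threshold v = 1: player 1 wins the objective MP_1^f from q, but no finite-memory player-1 strategy is winning from q. -/

import Mathlib

/-!
Common framework: weighted game arenas, plays, strategies, mean-payoff and
energy objectives, strong transition fairness.
-/

open Filter

/-- A two-player weighted game arena: `p1` is the set of player-1 nodes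
(player-2 nodes are the complement), `edge` the edge relation, `w` the integer
weight function, and every node has at least one outgoing edge. -/
structure Arena (Q : Type) where
  p1 : Set Q
  edge : Q → Q → Prop
  w : Q → Q → ℤ
  succ_exists : ∀ q, ∃ q', edge q q'

variable {Q : Type}

/-- A strategy: to every history `H` (the sequence of previously visited nodes)
and current node `q`, it assigns an edge-successor of `q`.  (It is only ever
consulted at the nodes of the corresponding player.) -/
def Strategy (A : Arena Q) : Type :=
  { f : List Q → Q → Q // ∀ H q, A.edge q (f H q) }

open Classical in
/-- Auxiliary: the history (list of earlier nodes) and the current node after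
`n` steps of the play from `q` in which player 1 uses `σ` and player 2 uses `π`. -/
noncomputable def hist (A : Arena Q) (σ π : Strategy A) (q : Q) : ℕ → List Q × Q
  | 0 => ([], q)
  | n + 1 =>
    let p := hist A σ π q n
    (p.1 ++ [p.2], if p.2 ∈ A.p1 then σ.1 p.1 p.2 else π.1 p.1 p.2)

/-- `play A σ π q` is the unique play from `q` conforming with the player-1
strategy `σ` and the player-2 strategy `π`. -/
noncomputable def play (A : Arena Q) (σ π : Strategy A) (q : Q) (n : ℕ) : Q :=
  (hist A σ π q n).2

/-- Weight `w(τ[0;i])` of the prefix of length `i` of the play `τ`. -/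
def prefWeight (A : Arena Q) (τ : ℕ → Q) (i : ℕ) : ℤ :=
  ∑ j ∈ Finset.range i, A.w (τ j) (τ (j + 1))

/-- `avg(τ) = liminf_{i→∞} w(τ[0;i])/i`. -/
noncomputable def mpAvg (A : Arena Q) (τ : ℕ → Q) : ℝ :=
  Filter.liminf (fun i : ℕ => (prefWeight A τ i : ℝ) / (i : ℝ)) Filter.atTop

/-- A play `τ` is fair (w.r.t. the fair edges `Ef`) if every fair edge whose
source node occurs infinitely often in `τ` is itself taken infinitely often. -/
def FairPlay (Ef : Q → Q → Prop) (τ : ℕ → Q) : Prop :=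
  ∀ q q', Ef q q' → (∀ N, ∃ i ≥ N, τ i = q) →
    (∀ N, ∃ i ≥ N, τ i = q ∧ τ (i + 1) = q')

/-- A strategy is memoryless (positional) if its choice depends only on the
current node. -/
def Memoryless (A : Arena Q) (σ : Strategy A) : Prop :=
  ∀ H₁ H₂ q, σ.1 H₁ q = σ.1 H₂ q

/-- A strategy is finite-memory if it is implemented by a memory structure
`(M, m0, α, β)` with `M` finite: the choice after history `H` at node `q` is
`β (α̂ m0 H) q`, where `α̂` iterates the update function `α` along `H`. -/
def FiniteMemory (A : Arena Q) (σ : Strategy A) : Prop :=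
  ∃ (M : Type) (_ : Finite M) (m0 : M) (α : M → Q → M) (β : M → Q → Q),
    ∀ H q, σ.1 H q = β (H.foldl α m0) q

/-- Energy objective with initial credit `c`: every prefix weight stays ≥ `-c`. -/
def EnObj (A : Arena Q) (c : ℕ) (τ : ℕ → Q) : Prop :=
  ∀ i : ℕ, 0 ≤ (c : ℤ) + prefWeight A τ i

/-- Player-1 winning region for an abstract objective. -/
def Win1 (A : Arena Q) (Obj : (ℕ → Q) → Prop) (q : Q) : Prop :=
  ∃ σ : Strategy A, ∀ π : Strategy A, Obj (play A σ π q)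

/-- Player-2 winning region for an abstract objective. -/
def Win2 (A : Arena Q) (Obj : (ℕ → Q) → Prop) (q : Q) : Prop :=
  ∃ π : Strategy A, ∀ σ : Strategy A, ¬ Obj (play A σ π q)

/-- The `i`-fair mean-payoff objective `MP_v^f` (for player 1), where `i = true`
means the arena is 1-fair and `i = false` means it is 2-fair:
`MP_v ∩ {fair plays}` in the 1-fair case and `MP_v ∪ {non-fair plays}` in the
2-fair case. -/
def MPfObj (A : Arena Q) (Ef : Q → Q → Prop) (v : ℝ) (i : Bool) (τ : ℕ → Q) : Prop :=
  if i then (v ≤ mpAvg A τ ∧ FairPlay Ef τ)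
  else (v ≤ mpAvg A τ ∨ ¬ FairPlay Ef τ)

/-- Player-1 winning region of a 1-fair energy game with unknown initial credit. -/
def Win1En1f (A : Arena Q) (Ef : Q → Q → Prop) (q : Q) : Prop :=
  ∃ c : ℕ, ∃ σ : Strategy A, ∀ π : Strategy A,
    EnObj A c (play A σ π q) ∧ FairPlay Ef (play A σ π q)

/-- Player-2 winning region of a 1-fair energy game with unknown initial credit. -/
def Win2En1f (A : Arena Q) (Ef : Q → Q → Prop) (q : Q) : Prop :=
  ∃ π : Strategy A, ∀ c : ℕ, ∀ σ : Strategy A,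
    ¬ (EnObj A c (play A σ π q) ∧ FairPlay Ef (play A σ π q))

/-- Player-1 winning region of a 2-fair energy game with unknown initial credit. -/
def Win1En2f (A : Arena Q) (Ef : Q → Q → Prop) (q : Q) : Prop :=
  ∃ c : ℕ, ∃ σ : Strategy A, ∀ π : Strategy A,
    EnObj A c (play A σ π q) ∨ ¬ FairPlay Ef (play A σ π q)

/-- Player-2 winning region of a 2-fair energy game with unknown initial credit. -/
def Win2En2f (A : Arena Q) (Ef : Q → Q → Prop) (q : Q) : Prop :=
  ∃ π : Strategy A, ∀ c : ℕ, ∀ σ : Strategy A,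
    ¬ (EnObj A c (play A σ π q) ∨ ¬ FairPlay Ef (play A σ π q))

/-- Player-1 winning region of an ordinary (non-fair) energy game with unknown
initial credit. -/
def Win1En (A : Arena Q) (q : Q) : Prop :=
  ∃ c : ℕ, ∃ σ : Strategy A, ∀ π : Strategy A, EnObj A c (play A σ π q)

/-- Player-2 winning region of an ordinary (non-fair) energy game with unknown
initial credit. -/
def Win2En (A : Arena Q) (q : Q) : Prop :=
  ∃ π : Strategy A, ∀ c : ℕ, ∀ σ : Strategy A, ¬ EnObj A c (play A σ π q)

/-- The arena of the example: two player-1 nodes `q = false` and `p = true`,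
a self-loop on `q` of weight `+1`, a fair edge `(q,p)` of weight `-4`, and an
edge `(p,q)` of weight `0`. -/
def exArena : Arena Bool where
  p1 := Set.univ
  edge := fun a b => ¬ (a = true ∧ b = true)
  w := fun a b => if a = true then 0 else if b = true then -4 else 1
  succ_exists := fun _ => ⟨false, by simp⟩

/-- The single fair edge `(q, p) = (false, true)`. -/
def exEf : Bool → Bool → Prop := fun a b => a = false ∧ b = true

namespace InfMemAux

/-! ### Basic facts about the example arena -/

lemma exArena_w (a b : Bool) :
    exArena.w a b = if a = true then 0 else if b = true then -4 else 1 := rfl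

lemma w_le_one (a b : Bool) : exArena.w a b ≤ 1 := by
  cases a <;> cases b <;> simp [exArena_w]

lemma w_ge_neg_four (a b : Bool) : -4 ≤ exArena.w a b := by
  cases a <;> cases b <;> simp [exArena_w]

lemma edge_true {σ : Strategy exArena} (H : List Bool) : σ.1 H true = false := by
  have h := σ.2 H true
  simpa [exArena] using h

/-! ### Unfolding plays -/

lemma hist_succ (σ π : Strategy exArena) (q : Bool) (n : ℕ) :
    hist exArena σ π q (n + 1) =
      ((hist exArena σ π q n).1 ++ [(hist exArena σ π q n).2],
        σ.1 (hist exArena σ π q n).1 (hist exArena σ π q n).2) := by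
  rw [hist]
  have : (hist exArena σ π q n).2 ∈ exArena.p1 := Set.mem_univ _
  simp [this]

lemma play_succ (σ π : Strategy exArena) (q : Bool) (n : ℕ) :
    play exArena σ π q (n + 1) =
      σ.1 (hist exArena σ π q n).1 (play exArena σ π q n) := by
  show (hist exArena σ π q (n+1)).2 = _
  rw [hist_succ]
  rfl

lemma hist_fst (σ π : Strategy exArena) (q : Bool) (n : ℕ) :
    (hist exArena σ π q n).1 = (List.range n).map (play exArena σ π q) := by
  induction n with
  | zero => rfl
  | succ n ih =>
      rw [hist_succ, List.range_succ]
      simp [ih]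
      rfl

lemma hist_len (σ π : Strategy exArena) (q : Bool) (n : ℕ) :
    (hist exArena σ π q n).1.length = n := by
  rw [hist_fst]; simp

/-! ### Prefix-weight generalities -/

lemma prefWeight_le (τ : ℕ → Bool) (i : ℕ) : prefWeight exArena τ i ≤ i := by
  calc prefWeight exArena τ i ≤ ∑ _j ∈ Finset.range i, (1 : ℤ) :=
        Finset.sum_le_sum (fun j _ => w_le_one _ _)
    _ = i := by simp

lemma prefWeight_ge (τ : ℕ → Bool) (i : ℕ) : -4 * i ≤ prefWeight exArena τ i := by
  calc (-4 : ℤ) * i = ∑ _j ∈ Finset.range i, (-4 : ℤ) := by simp [mul_comm]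
    _ ≤ prefWeight exArena τ i := Finset.sum_le_sum (fun j _ => w_ge_neg_four _ _)

lemma prefWeight_add (τ : ℕ → Bool) (n m : ℕ) :
    prefWeight exArena τ (n + m) =
      prefWeight exArena τ n +
        ∑ r ∈ Finset.range m, exArena.w (τ (n + r)) (τ (n + r + 1)) := by
  induction m with
  | zero => simp
  | succ m ih =>
      rw [← Nat.add_assoc, prefWeight, Finset.sum_range_succ, ← prefWeight, ih,
        Finset.sum_range_succ, add_assoc]

/-! ### The jump sequence for Part 1 -/

/-- `jump n = true` iff `n` is a power of two that is at least `2`. -/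
def jump (n : ℕ) : Bool := decide (2 ≤ n ∧ 2 ^ Nat.log 2 n = n)

lemma jump_iff {n : ℕ} : jump n = true ↔ ∃ k, 1 ≤ k ∧ n = 2 ^ k := by
  constructor
  · intro h
    simp only [jump, decide_eq_true_eq] at h
    exact ⟨Nat.log 2 n, Nat.log_pos one_lt_two h.1, h.2.symm⟩
  · rintro ⟨k, hk, rfl⟩
    simp only [jump, decide_eq_true_eq]
    constructor
    · calc 2 = 2 ^ 1 := by norm_num
        _ ≤ 2 ^ k := Nat.pow_le_pow_right (by norm_num) hk
    · rw [Nat.log_pow one_lt_two]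

lemma jump_zero : jump 0 = false := by decide

lemma two_dvd_of_jump {n : ℕ} (h : jump n = true) : 2 ∣ n := by
  obtain ⟨k, hk, rfl⟩ := jump_iff.mp h
  exact dvd_pow_self 2 (by omega)

lemma jump_succ {n : ℕ} (h : jump n = true) : jump (n + 1) = false := by
  rw [Bool.eq_false_iff]
  intro h'
  have h1 := two_dvd_of_jump h
  have h2 := two_dvd_of_jump h'
  omega

lemma jump_pow {k : ℕ} (hk : 1 ≤ k) : jump (2 ^ k) = true :=
  jump_iff.mpr ⟨k, hk, rfl⟩

lemma jump_pow_pred {k : ℕ} (hk : 2 ≤ k) : jump (2 ^ k - 1) = false := by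
  rw [Bool.eq_false_iff]
  intro h'
  have h2 := two_dvd_of_jump h'
  have h3 : 2 ∣ 2 ^ k := dvd_pow_self 2 (by omega)
  have h4 : 4 ≤ 2 ^ k := by
    calc (4:ℕ) = 2 ^ 2 := by norm_num
      _ ≤ 2 ^ k := Nat.pow_le_pow_right (by norm_num) hk
  omega

/-- The player-1 strategy realizing the jump sequence. -/
def sigmaStar : Strategy exArena :=
  ⟨fun H q => if q = true then false else jump (H.length + 1), by
    intro H q
    cases q <;> simp [exArena]⟩

lemma play_star (π : Strategy exArena) (n : ℕ) :
    play exArena sigmaStar π false n = jump n := by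
  induction n with
  | zero => rw [jump_zero]; rfl
  | succ n ih =>
      rw [play_succ, ih]
      show (if jump n = true then false
        else jump ((hist exArena sigmaStar π false n).1.length + 1)) = jump (n + 1)
      rw [hist_len]
      cases hj : jump n with
      | false => simp
      | true => simp [jump_succ hj]

lemma jump_fair : FairPlay exEf (fun n => jump n) := by
  rintro q q' ⟨rfl, rfl⟩ _ N
  refine ⟨2 ^ (N + 2) - 1, ?_, ?_, ?_⟩
  · have := Nat.lt_two_pow_self (n := N + 2)
    omega
  · exact jump_pow_pred (by omega)
  · have h1 : 1 ≤ 2 ^ (N + 2) := Nat.one_le_two_pow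
    rw [Nat.sub_add_cancel h1]
    exact jump_pow (by omega)

/-! ### Counting jumps -/

lemma jump_count_le (i : ℕ) :
    ((Finset.range i).filter (fun n => jump n = true)).card ≤ Nat.log 2 i + 1 := by
  have : ((Finset.range i).filter (fun n => jump n = true)).card ≤
      (Finset.range (Nat.log 2 i + 1)).card := by
    apply Finset.card_le_card_of_injOn (fun n => Nat.log 2 n)
    · intro n hn
      simp only [Finset.coe_filter, Finset.mem_coe, Finset.mem_filter, Finset.mem_range, Set.mem_setOf_eq] at hn ⊢
      exact Nat.lt_succ_of_le (Nat.log_mono_right hn.1.le)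
    · intro n hn m hm hnm
      simp only [Finset.coe_filter, Finset.mem_range, Set.mem_setOf_eq] at hn hm
      have h1 : 2 ≤ n ∧ 2 ^ Nat.log 2 n = n := by
        simpa [jump, decide_eq_true_eq] using hn.2
      have h2 : 2 ≤ m ∧ 2 ^ Nat.log 2 m = m := by
        simpa [jump, decide_eq_true_eq] using hm.2
      dsimp only at hnm
      rw [← h1.2, ← h2.2, hnm]
  simpa using this

lemma jump_indicator_sum_le (i : ℕ) :
    ∑ n ∈ Finset.range i, (if jump n = true then (1:ℤ) else 0) ≤ Nat.log 2 i + 1 := by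
  rw [Finset.sum_boole]
  exact_mod_cast jump_count_le i

lemma pref_jump_ge (i : ℕ) :
    (i : ℤ) - 10 * (Nat.log 2 (i + 1) + 1) ≤ prefWeight exArena (fun n => jump n) i := by
  set g : ℕ → ℤ := fun n => if jump n = true then (1:ℤ) else 0 with hg
  have hgnn : ∀ n, 0 ≤ g n := by intro n; simp only [hg]; split <;> norm_num
  have hpt : ∀ j, 1 - 5 * g j - 5 * g (j + 1) ≤ exArena.w (jump j) (jump (j+1)) := by
    intro j
    simp only [hg]
    cases hj : jump j <;> cases hj' : jump (j+1) <;> simp [exArena_w]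
  have hsum : (i : ℤ) - 5 * (∑ j ∈ Finset.range i, g j) -
      5 * (∑ j ∈ Finset.range i, g (j + 1)) ≤ prefWeight exArena (fun n => jump n) i := by
    calc (i : ℤ) - 5 * (∑ j ∈ Finset.range i, g j) - 5 * (∑ j ∈ Finset.range i, g (j + 1))
        = ∑ j ∈ Finset.range i, (1 - 5 * g j - 5 * g (j + 1)) := by
          simp only [Finset.sum_sub_distrib, Finset.sum_const, Finset.card_range,
            nsmul_eq_mul, mul_one, ← Finset.mul_sum]
      _ ≤ _ := Finset.sum_le_sum (fun j _ => hpt j)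
  have hS : ∑ n ∈ Finset.range (i + 1), g n ≤ (Nat.log 2 (i+1) : ℤ) + 1 :=
    jump_indicator_sum_le (i + 1)
  have h1 : ∑ j ∈ Finset.range i, g j ≤ ∑ n ∈ Finset.range (i + 1), g n :=
    Finset.sum_le_sum_of_subset_of_nonneg
      (Finset.range_subset_range.mpr (Nat.le_succ i)) (fun n _ _ => hgnn n)
  have h2 : ∑ j ∈ Finset.range i, g (j + 1) ≤ ∑ n ∈ Finset.range (i + 1), g n := by
    rw [Finset.sum_range_succ']
    exact le_add_of_nonneg_right (hgnn 0)
  linarith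

/-! ### Limit lemmas -/

lemma tendsto_natLog_div :
    Filter.Tendsto (fun i : ℕ => (Nat.log 2 i : ℝ) / i) Filter.atTop (nhds 0) := by
  have hlog : Filter.Tendsto (fun x : ℝ => Real.log x / x) Filter.atTop (nhds 0) :=
    Real.isLittleO_log_id_atTop.tendsto_div_nhds_zero
  have hcomp : Filter.Tendsto (fun i : ℕ => Real.log i / i) Filter.atTop (nhds 0) :=
    hlog.comp tendsto_natCast_atTop_atTop
  have hmul : Filter.Tendsto (fun i : ℕ => (Real.log 2)⁻¹ * (Real.log i / i))
      Filter.atTop (nhds 0) := by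
    simpa using hcomp.const_mul (Real.log 2)⁻¹
  apply tendsto_of_tendsto_of_tendsto_of_le_of_le' tendsto_const_nhds hmul
  · exact Filter.Eventually.of_forall (fun i => by positivity)
  · filter_upwards [Filter.eventually_ge_atTop 1] with i hi
    have hi0 : (0:ℝ) < i := by exact_mod_cast hi
    have hlb : (Nat.log 2 i : ℝ) ≤ Real.logb 2 i := Real.natLog_le_logb i 2
    have hlogb : Real.logb 2 i = Real.log i / Real.log 2 := rfl
    rw [div_le_iff₀ hi0]
    calc (Nat.log 2 i : ℝ) ≤ Real.log i / Real.log 2 := hlogb ▸ hlb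
      _ = (Real.log 2)⁻¹ * (Real.log ↑i / ↑i) * ↑i := by
          field_simp
  
lemma tendsto_lb :
    Filter.Tendsto (fun i : ℕ => 1 - 10 * ((Nat.log 2 (i+1) : ℝ) + 1) / i)
      Filter.atTop (nhds 1) := by
  have h1 : Filter.Tendsto (fun i : ℕ => (Nat.log 2 (i+1) : ℝ) / ((i:ℝ)+1))
      Filter.atTop (nhds 0) := by
    have h0 := tendsto_natLog_div.comp (Filter.tendsto_add_atTop_nat 1)
    have heq : ((fun i : ℕ => (Nat.log 2 i : ℝ) / ↑i) ∘ fun a => a + 1) =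
        fun i : ℕ => (Nat.log 2 (i+1) : ℝ) / ((i:ℝ)+1) := by
      funext i
      simp only [Function.comp_apply]
      push_cast
      ring
    rwa [heq] at h0
  have h2 : Filter.Tendsto (fun i : ℕ => (Nat.log 2 (i+1) : ℝ) / i)
      Filter.atTop (nhds 0) := by
    apply tendsto_of_tendsto_of_tendsto_of_le_of_le' tendsto_const_nhds
      (by simpa using h1.const_mul (2:ℝ))
    · exact Filter.Eventually.of_forall (fun i => by positivity)
    · filter_upwards [Filter.eventually_ge_atTop 1] with i hi
      have hi0 : (0:ℝ) < i := by exact_mod_cast hi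
      have hle : (i : ℝ) + 1 ≤ 2 * i := by
        have : (1:ℝ) ≤ i := by exact_mod_cast hi
        linarith
      rw [div_le_iff₀ hi0]
      have hnn : (0:ℝ) ≤ (Nat.log 2 (i+1) : ℝ) := by positivity
      calc (Nat.log 2 (i+1) : ℝ) = (Nat.log 2 (i+1) : ℝ) / ((i:ℝ)+1) * ((i:ℝ)+1) := by
            field_simp
        _ ≤ (Nat.log 2 (i+1) : ℝ) / ((i:ℝ)+1) * (2 * i) := by
            apply mul_le_mul_of_nonneg_left hle (by positivity)
        _ = 2 * ((Nat.log 2 (i+1) : ℝ) / ((i:ℝ)+1)) * i := by ring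
  have h3 : Filter.Tendsto (fun i : ℕ => (1:ℝ) / i) Filter.atTop (nhds 0) :=
    tendsto_one_div_atTop_nhds_zero_nat
  have := ((h2.const_mul (10:ℝ)).add (h3.const_mul (10:ℝ))).const_sub 1
  simp only [mul_zero, add_zero, sub_zero] at this
  convert this using 2 with i
  ring

/-! ### Part 1: player 1 wins from `false` -/

lemma avg_jump : (1:ℝ) ≤ mpAvg exArena (fun n => jump n) := by
  set τ : ℕ → Bool := fun n => jump n with hτ
  set f : ℕ → ℝ := fun i => (prefWeight exArena τ i : ℝ) / i with hf
  set h : ℕ → ℝ := fun i => 1 - 10 * ((Nat.log 2 (i+1) : ℝ) + 1) / i with hh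
  have htend : Filter.Tendsto h Filter.atTop (nhds 1) := tendsto_lb
  have hle : ∀ᶠ i in Filter.atTop, h i ≤ f i := by
    filter_upwards [Filter.eventually_ge_atTop 1] with i hi
    have hi0 : (0:ℝ) < i := by exact_mod_cast hi
    have hp := pref_jump_ge i
    have hcast : (i:ℝ) - 10 * ((Nat.log 2 (i+1) : ℝ) + 1) ≤ (prefWeight exArena τ i : ℝ) := by
      exact_mod_cast hp
    have hdiv : ((i:ℝ) - 10 * ((Nat.log 2 (i+1) : ℝ) + 1)) / i
        ≤ (prefWeight exArena τ i : ℝ) / i := by gcongr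
    have heq : h i = ((i:ℝ) - 10 * ((Nat.log 2 (i+1) : ℝ) + 1)) / i := by
      simp only [hh]
      rw [sub_div, div_self (ne_of_gt hi0)]
    rw [heq]
    exact hdiv
  have hbl : Filter.IsBoundedUnder (· ≥ ·) Filter.atTop h := htend.isBoundedUnder_ge
  have hfub : ∀ i, f i ≤ 1 := by
    intro i
    rcases Nat.eq_zero_or_pos i with rfl | hi
    · simp [hf]
    · have hi0 : (0:ℝ) < i := by exact_mod_cast hi
      rw [hf, div_le_one hi0]
      exact_mod_cast prefWeight_le τ i
  have hcb : Filter.IsCoboundedUnder (· ≥ ·) Filter.atTop f :=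
    Filter.IsBoundedUnder.isCoboundedUnder_ge
      ⟨1, Filter.eventually_map.mpr (Filter.Eventually.of_forall hfub)⟩
  calc (1:ℝ) = Filter.liminf h Filter.atTop := (htend.liminf_eq).symm
    _ ≤ Filter.liminf f Filter.atTop := Filter.liminf_le_liminf hle hbl hcb
    _ = mpAvg exArena τ := rfl

/-! ### Part 2: no finite-memory strategy wins -/

lemma part2 (σ : Strategy exArena) (hfm : FiniteMemory exArena σ)
    (hwin : ∀ π : Strategy exArena, MPfObj exArena exEf 1 true (play exArena σ π false)) :
    False := by
  obtain ⟨M, hM, m0, α, β, hβ⟩ := hfm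
  have hobj : 1 ≤ mpAvg exArena (play exArena σ σ false) ∧
      FairPlay exEf (play exArena σ σ false) := by
    simpa [MPfObj] using hwin σ
  set τ : ℕ → Bool := play exArena σ σ false with hτdef
  obtain ⟨hmp, hfair⟩ := hobj
  -- the finite-state machine driving the play
  set step : M × Bool → M × Bool := fun x => (α x.1 x.2, β x.1 x.2) with hstep
  set s : ℕ → M × Bool := fun n => step^[n] (m0, false) with hs
  have key : ∀ n, ((hist exArena σ σ false n).1.foldl α m0, τ n) = s n := by
    intro n
    induction n with
    | zero => rfl
    | succ n ih =>
        have hfst : (hist exArena σ σ false (n+1)).1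
            = (hist exArena σ σ false n).1 ++ [(hist exArena σ σ false n).2] := by
          rw [hist_succ]
        have hτn : τ (n+1) = σ.1 (hist exArena σ σ false n).1 (τ n) := play_succ σ σ false n
        rw [hs]
        simp only
        rw [Function.iterate_succ_apply']
        rw [hs] at ih
        simp only at ih
        rw [← ih, hτn, hβ, hfst, List.foldl_append]
        rfl
  have hτs : ∀ n, τ n = (s n).2 := fun n => congrArg Prod.snd (key n)
  -- eventual periodicity
  haveI : Finite M := hM
  obtain ⟨a, b, hab, hsab⟩ := Finite.exists_ne_map_eq_of_infinite s
  obtain ⟨i, T, hTpos', hsiT⟩ : ∃ i T, 0 < T ∧ s (i + T) = s i := by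
    rcases lt_or_gt_of_ne hab with h | h
    · exact ⟨a, b - a, by omega, by rw [Nat.add_sub_cancel' h.le]; exact hsab.symm⟩
    · exact ⟨b, a - b, by omega, by rw [Nat.add_sub_cancel' h.le]; exact hsab⟩
  have sadd : ∀ p q : ℕ, s (p + q) = step^[q] (s p) := by
    intro p q
    rw [hs]
    simp only
    rw [Nat.add_comm, Function.iterate_add_apply]
  have per : ∀ n, i ≤ n → s (n + T) = s n := by
    intro n hn
    obtain ⟨m, rfl⟩ := Nat.exists_eq_add_of_le hn
    calc s (i + m + T) = s (i + T + m) := by rw [show i + m + T = i + T + m by omega]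
      _ = step^[m] (s (i + T)) := sadd _ _
      _ = step^[m] (s i) := by rw [hsiT]
      _ = s (i + m) := (sadd _ _).symm
  have τper : ∀ n, i ≤ n → τ (n + T) = τ n := fun n hn => by
    rw [hτs, hτs, per n hn]
  -- `false` occurs infinitely often, so fairness yields a fair step after `i`
  have hinf : ∀ N, ∃ k ≥ N, τ k = false := by
    intro N
    cases hb : τ N with
    | false => exact ⟨N, le_refl N, hb⟩
    | true =>
        refine ⟨N + 1, by omega, ?_⟩
        have hps : τ (N + 1) = σ.1 (hist exArena σ σ false N).1 (τ N) := play_succ σ σ false N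
        rw [hps, hb, edge_true]
  obtain ⟨n₀, hn₀i, hτ0, hτ1⟩ := hfair false true ⟨rfl, rfl⟩ hinf i
  -- the period is at least 2
  have hT2 : 2 ≤ T := by
    by_contra h
    have hT1 : T = 1 := by omega
    have hcontra := τper n₀ hn₀i
    rw [hT1] at hcontra
    rw [hτ0, hτ1] at hcontra
    exact Bool.noConfusion hcontra
  -- periodicity of τ beyond n₀
  have τp : ∀ m r : ℕ, τ (n₀ + r + m * T) = τ (n₀ + r) := by
    intro m r
    induction m with
    | zero => simp
    | succ m ih =>
        have he : n₀ + r + (m + 1) * T = (n₀ + r + m * T) + T := by ring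
        rw [he, τper _ (by omega), ih]
  -- the per-period weight
  set c : ℤ := ∑ r ∈ Finset.range T, exArena.w (τ (n₀ + r)) (τ (n₀ + r + 1)) with hc
  have pref_lin : ∀ m : ℕ,
      prefWeight exArena τ (n₀ + m * T) = prefWeight exArena τ n₀ + m * c := by
    intro m
    induction m with
    | zero => simp
    | succ m ih =>
        have h1 : n₀ + (m + 1) * T = (n₀ + m * T) + T := by ring
        rw [h1, prefWeight_add, ih]
        have h2 : ∀ r ∈ Finset.range T,
            exArena.w (τ (n₀ + m * T + r)) (τ (n₀ + m * T + r + 1))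
              = exArena.w (τ (n₀ + r)) (τ (n₀ + r + 1)) := by
          intro r _
          have e1 : n₀ + m * T + r = n₀ + r + m * T := by ring
          have e2 : n₀ + m * T + r + 1 = n₀ + (r + 1) + m * T := by ring
          rw [e2, e1, τp, τp, ← Nat.add_assoc]
        rw [Finset.sum_congr rfl h2, ← hc]
        push_cast
        ring
  -- bounding the per-period weight
  have hw0 : exArena.w (τ (n₀ + 0)) (τ (n₀ + 0 + 1)) = -4 := by
    have : n₀ + 0 = n₀ := rfl
    rw [this, hτ0, hτ1]
    rfl
  have hw1 : exArena.w (τ (n₀ + 1)) (τ (n₀ + 1 + 1)) = 0 := by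
    rw [hτ1]
    rfl
  have hcbound : c ≤ (T : ℤ) - 6 := by
    have hsub : ({0, 1} : Finset ℕ) ⊆ Finset.range T := by
      intro x hx
      simp only [Finset.mem_insert, Finset.mem_singleton] at hx
      rcases hx with rfl | rfl <;> simp only [Finset.mem_range] <;> omega
    have h6 : (6 : ℤ) ≤
        ∑ r ∈ Finset.range T, (1 - exArena.w (τ (n₀ + r)) (τ (n₀ + r + 1))) := by
      have hsubsum := Finset.sum_le_sum_of_subset_of_nonneg hsub (fun r _ _ => by
        show (0:ℤ) ≤ 1 - exArena.w (τ (n₀ + r)) (τ (n₀ + r + 1))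
        have := w_le_one (τ (n₀ + r)) (τ (n₀ + r + 1)); linarith)
      have hpair : ∑ r ∈ ({0, 1} : Finset ℕ),
          (1 - exArena.w (τ (n₀ + r)) (τ (n₀ + r + 1))) = 6 := by
        rw [Finset.sum_pair (by norm_num)]
        rw [hw0, hw1]
        norm_num
      linarith
    have hsum1 : ∑ r ∈ Finset.range T, (1 - exArena.w (τ (n₀ + r)) (τ (n₀ + r + 1)))
        = (T : ℤ) - c := by
      rw [Finset.sum_sub_distrib, hc]
      simp
    linarith [hsum1 ▸ h6]
  -- limits
  set K : ℤ := prefWeight exArena τ n₀ with hK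
  set f : ℕ → ℝ := fun k => (prefWeight exArena τ k : ℝ) / k with hfdef
  have hTpos : (0 : ℝ) < T := by exact_mod_cast hTpos'
  have hcT : (c : ℝ) < T := by
    have : c < (T : ℤ) := by linarith
    exact_mod_cast this
  set A : ℝ := ((c : ℝ) / T + 1) / 2 with hA
  have hdivlt : (c : ℝ) / T < 1 := (div_lt_one hTpos).mpr hcT
  have hcA : (c : ℝ) / T < A := by rw [hA]; linarith
  have hA1 : A < 1 := by rw [hA]; linarith
  -- f is bounded below
  have hbd : Filter.IsBoundedUnder (· ≥ ·) Filter.atTop f := by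
    refine ⟨-4, Filter.eventually_map.mpr (Filter.Eventually.of_forall fun k => ?_)⟩
    show -4 ≤ f k
    rcases Nat.eq_zero_or_pos k with rfl | hk
    · simp [hfdef]
    · have hk0 : (0 : ℝ) < k := by exact_mod_cast hk
      rw [hfdef]
      simp only
      rw [le_div_iff₀ hk0]
      have hpw := prefWeight_ge τ k
      calc (-4 : ℝ) * k = ((-4 * k : ℤ) : ℝ) := by push_cast; ring
        _ ≤ _ := by exact_mod_cast hpw
  have hlim : A < Filter.liminf f Filter.atTop := lt_of_lt_of_le hA1 hmp
  have hev : ∀ᶠ k in Filter.atTop, A < f k :=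
    Filter.eventually_lt_of_lt_liminf hlim hbd
  -- the subsequence n₀ + m*T
  have hgt : Filter.Tendsto (fun m : ℕ => n₀ + m * T) Filter.atTop Filter.atTop := by
    apply Filter.tendsto_atTop_mono (fun m => ?_) Filter.tendsto_id
    have h1 : m ≤ m * T := Nat.le_mul_of_pos_right m (by omega)
    simp only [id_eq]
    omega
  have hev2 : ∀ᶠ m in Filter.atTop, A < f (n₀ + m * T) := hgt.eventually hev
  have hfeq : ∀ m : ℕ, f (n₀ + m * T) = ((K : ℝ) + m * c) / ((n₀ : ℝ) + m * T) := by
    intro m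
    rw [hfdef]
    simp only
    rw [pref_lin m, hK]
    push_cast
    ring
  have hF : Filter.Tendsto (fun m : ℕ => ((K : ℝ) + m * c) / ((n₀ : ℝ) + m * T))
      Filter.atTop (nhds ((c : ℝ) / T)) := by
    have hnum : Filter.Tendsto (fun m : ℕ => (K : ℝ) / m + c) Filter.atTop
        (nhds (0 + c)) :=
      (tendsto_const_div_atTop_nhds_zero_nat (K : ℝ)).add tendsto_const_nhds
    have hden : Filter.Tendsto (fun m : ℕ => (n₀ : ℝ) / m + T) Filter.atTop
        (nhds (0 + T)) :=
      (tendsto_const_div_atTop_nhds_zero_nat (n₀ : ℝ)).add tendsto_const_nhds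
    have hdiv := hnum.div hden (by rw [zero_add]; exact ne_of_gt hTpos)
    rw [zero_add, zero_add] at hdiv
    apply hdiv.congr'
    filter_upwards [Filter.eventually_ge_atTop 1] with m hm
    have hm0 : (0 : ℝ) < m := by exact_mod_cast hm
    have hden1 : (0 : ℝ) < (n₀ : ℝ) + m * T := by
      have : (0 : ℝ) < (m : ℝ) * T := mul_pos hm0 hTpos
      have hn0 : (0 : ℝ) ≤ (n₀ : ℝ) := Nat.cast_nonneg _
      linarith
    have hden2 : (0 : ℝ) < (n₀ : ℝ) / m + T := by positivity
    show ((K:ℝ)/m + c)/((n₀:ℝ)/m + T) = ((K:ℝ) + m*c)/((n₀:ℝ) + m*T)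
    rw [div_eq_div_iff (ne_of_gt hden2) (ne_of_gt hden1)]
    field_simp
  have hAle : A ≤ (c : ℝ) / T := by
    apply ge_of_tendsto hF
    filter_upwards [hev2] with m hm
    rw [← hfeq m]
    exact hm.le
  exact absurd hAle (not_le.mpr hcA)

end InfMemAux

/-- Player 1 may need infinite memory in 1-fair mean-payoff
games: in the concrete 1-fair game above with threshold `v = 1`, player 1 wins
the objective `MP₁^f` from `q = false`, but no finite-memory player-1 strategy
is winning from `q`. -/
theorem onefair_meanpayoff_needs_infinite_memory :
    Win1 exArena (MPfObj exArena exEf 1 true) false ∧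
    ∀ σ : Strategy exArena, FiniteMemory exArena σ →
      ¬ ∀ π : Strategy exArena,
        MPfObj exArena exEf 1 true (play exArena σ π false) := by
  constructor
  · refine ⟨InfMemAux.sigmaStar, fun π => ?_⟩
    have hplay : play exArena InfMemAux.sigmaStar π false = fun n => InfMemAux.jump n :=
      funext (InfMemAux.play_star π)
    simp only [MPfObj, if_true, hplay]
    exact ⟨InfMemAux.avg_jump, InfMemAux.jump_fair⟩
  · intro σ hfm hwin
    exact InfMemAux.part2 σ hfm hwin
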